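/- arXiv:math/0508050 — 6 statements merged into one kernel-verified Lean document; each statement's English description precedes it below -/
import Mathlib

section
/- Let g : ℝ → ℝ be the translation g(t) = t + 1, and let C = ⋃_{n ∈ ℤ} (n + C₀), where C₀ is the standard middle-thirds Cantor set in [0,1]. There exists an increasing homeomorphism f : ℝ → ℝ with f(C) = C and f([n, n+1]) = [n+1, n+2] for every n ∈ ℤ, such that for the group G generated by f and g: the G-orbit of 0 equals ℤ, and there exists a point x₀ ∈ C₀ ∖ ℤ whose G-orbit is dense in C. -/
/-!
On `[0, 1]` the group `G` acts through the Cantor-set model of Thompson's group `F`, generated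
by `x₀` and `x₁ = σ x₀ σ⁻¹` with `σ t = (2 + t) / 3`; both preserve `C₀` and fix `0` and `1`.
With `τ t = t + 1` take `f = τ (τ x₁ τ⁻¹) x₀`: then `τ⁻¹ f` and `τ⁻² f τ` agree with `x₀` and
`x₁` on `[0, 1]`. Every generator maps `ℤ` onto `ℤ` and `C` onto `C`, which confines the orbits.
For density, `σ⁻¹ (x₀⁻¹ x₁ x₀) σ = x₁` on `[0, 1]` makes the `F`-orbit of `2/3` stable under
`σ`, and `x₀` supplies `t ↦ t / 3`; by the self-similarity `C₀ = C₀ / 3 ∪ σ C₀` the orbit is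
dense in `C₀`, and powers of `τ` carry this to all of `C`.
-/

open Set Topology Filter

/-- The `G`-orbit of `x ∈ ℝ` under a group of increasing homeomorphisms of `ℝ`
(= order isomorphisms of `ℝ`). -/
def orbitR (G : Subgroup (ℝ ≃o ℝ)) (x : ℝ) : Set ℝ := {y | ∃ g ∈ G, g x = y}

/-- The standard middle-thirds Cantor set: points of `[0,1]` admitting a ternary expansion
using only the digits `0` and `2`. -/
def cantorC : Set ℝ :=
  {x | ∃ a : ℕ → ℕ, (∀ n, a n = 0 ∨ a n = 2) ∧ x = ∑' n, (a n : ℝ) / 3 ^ (n + 1)}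

/-- `C = ⋃ₙ (n + C₀)`: a middle-thirds Cantor set in each interval `[n, n+1]`. -/
def CZ : Set ℝ := ⋃ n : ℤ, (fun t => (n : ℝ) + t) '' cantorC

open Pointwise MulAction

theorem mem_stabilizer_iff_image_eq {α : Type*} [LE α] {h : α ≃o α} {s : Set α} :
    h ∈ stabilizer (α ≃o α) s ↔ h '' s = s := by
  rw [mem_stabilizer_iff, ← image_smul]
  rfl

theorem orbitR_subset_of_le_stabilizer {G : Subgroup (ℝ ≃o ℝ)} {s : Set ℝ} {x : ℝ}
    (hG : G ≤ stabilizer (ℝ ≃o ℝ) s) (hx : x ∈ s) : orbitR G x ⊆ s := by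
  rintro _ ⟨g, hg, rfl⟩
  exact mem_stabilizer_iff_image_eq.1 (hG hg) ▸ mem_image_of_mem g hx

theorem apply_mem_orbitR {G : Subgroup (ℝ ≃o ℝ)} {g : ℝ ≃o ℝ} {x y : ℝ} (hg : g ∈ G)
    (hy : y ∈ orbitR G x) : g y ∈ orbitR G x := by
  obtain ⟨g', hg', rfl⟩ := hy
  exact ⟨g * g', G.mul_mem hg hg', rfl⟩

theorem mem_orbitR_self (G : Subgroup (ℝ ≃o ℝ)) (x : ℝ) : x ∈ orbitR G x :=
  ⟨1, G.one_mem, rfl⟩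

def realizedOn {α : Type*} [LE α] (K : Subgroup (α ≃o α)) (s : Set α) : Subgroup (α ≃o α) where
  carrier := {h | h '' s = s ∧ ∃ k ∈ K, EqOn k h s}
  mul_mem' := by
    rintro h₁ h₂ ⟨hs₁, k₁, hk₁, e₁⟩ ⟨hs₂, k₂, hk₂, e₂⟩
    refine ⟨by rw [RelIso.coe_mul, image_comp, hs₂, hs₁], k₁ * k₂, K.mul_mem hk₁ hk₂,
      fun x hx ↦ ?_⟩
    have hx₂ : h₂ x ∈ s := hs₂ ▸ mem_image_of_mem h₂ hx
    simp only [RelIso.mul_apply, e₂ hx, e₁ hx₂]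
  one_mem' := ⟨image_id s, 1, K.one_mem, fun _ _ ↦ rfl⟩
  inv_mem' := by
    rintro h ⟨hs, k, hk, e⟩
    have hs' : h.symm '' s = s := by
      conv_lhs => rw [← hs]
      exact h.symm_image_image s
    refine ⟨hs', k⁻¹, K.inv_mem hk, fun x hx ↦ ?_⟩
    change k.symm x = h.symm x
    rw [k.symm_apply_eq, e (hs' ▸ mem_image_of_mem h.symm hx), h.apply_symm_apply]

theorem realizedOn_le_stabilizer {α : Type*} [LE α] (K : Subgroup (α ≃o α)) (s : Set α) :
    realizedOn K s ≤ stabilizer (α ≃o α) s :=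
  fun _ hh ↦ mem_stabilizer_iff_image_eq.2 hh.1

theorem orbitR_subset_of_le_realizedOn {H K : Subgroup (ℝ ≃o ℝ)} {s : Set ℝ} {x : ℝ}
    (hH : H ≤ realizedOn K s) (hx : x ∈ s) : orbitR H x ⊆ orbitR K x := by
  rintro _ ⟨h, hh, rfl⟩
  obtain ⟨-, k, hk, e⟩ := hH hh
  exact ⟨k, hk, e hx⟩

theorem cantorC_eq_cantorSet : cantorC = cantorSet := by
  ext x
  rw [cantorSet_eq_zero_two_ofDigits]
  constructor
  · rintro ⟨a, ha, rfl⟩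
    refine ⟨fun n ↦ ⟨a n, by rcases ha n with h | h <;> omega⟩, fun n ↦ ?_, tsum_congr fun n ↦ ?_⟩
    · rcases ha n with h | h <;> simp [Fin.ext_iff, h]
    · simp [Real.ofDigitsTerm, div_eq_mul_inv]
  · rintro ⟨d, hd, rfl⟩
    refine ⟨fun n ↦ d n, fun n ↦ ?_, rfl⟩
    have h3 := (d n).isLt
    have h1 : (d n : ℕ) ≠ 1 := fun h ↦ hd n (Fin.ext h)
    dsimp only
    omega

noncomputable def rightThird : ℝ ≃o ℝ :=
  (OrderIso.addLeft 2).trans (OrderIso.divRight₀ 3 (by norm_num))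

theorem rightThird_apply (x : ℝ) : rightThird x = (2 + x) / 3 := rfl

theorem rightThird_zero : rightThird 0 = 2 / 3 := by norm_num [rightThird_apply]

theorem cantorSet_eq_div_three_union_rightThird :
    cantorSet = (· / 3) '' cantorSet ∪ rightThird '' cantorSet :=
  cantorSet_eq_union_halves

theorem div_three_mem_cantorSet {x : ℝ} (hx : x ∈ cantorSet) : x / 3 ∈ cantorSet :=
  cantorSet_eq_div_three_union_rightThird ▸ Or.inl ⟨x, hx, rfl⟩

theorem rightThird_mem_cantorSet {x : ℝ} (hx : x ∈ cantorSet) : rightThird x ∈ cantorSet :=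
  cantorSet_eq_div_three_union_rightThird ▸ Or.inr ⟨x, hx, rfl⟩

theorem two_thirds_mem_cantorC : (2 / 3 : ℝ) ∈ cantorC :=
  cantorC_eq_cantorSet ▸ rightThird_zero ▸ rightThird_mem_cantorSet zero_mem_cantorSet

theorem dist_rightThird (x y : ℝ) : dist (rightThird x) (rightThird y) = dist x y / 3 := by
  rw [Real.dist_eq, Real.dist_eq, rightThird_apply, rightThird_apply, ← sub_div,
    add_sub_add_left_eq_sub, abs_div, abs_of_pos (by norm_num : (0 : ℝ) < 3)]

theorem dist_div_three (x y : ℝ) : dist (x / 3) (y / 3) = dist x y / 3 := by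
  rw [Real.dist_eq, Real.dist_eq, ← sub_div, abs_div, abs_of_pos (by norm_num : (0 : ℝ) < 3)]

theorem cantorSet_subset_closure {S : Set ℝ} {a : ℝ} (ha : a ∈ S) (ha01 : a ∈ Icc 0 1)
    (hdiv : ∀ x ∈ S, x / 3 ∈ S) (hright : ∀ x ∈ S, rightThird x ∈ S) :
    cantorSet ⊆ closure S := by
  have approx : ∀ k : ℕ, ∀ c ∈ cantorSet, ∃ d ∈ S, dist c d ≤ (1 / 3) ^ k := by
    intro k
    induction k with
    | zero =>
      intro c hc
      refine ⟨a, ha, ?_⟩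
      rw [pow_zero]
      exact Real.dist_le_of_mem_Icc_01 (cantorSet_subset_unitInterval hc) ha01
    | succ k ih =>
      intro c hc
      rcases cantorSet_eq_div_three_union_rightThird.subset hc with ⟨y, hy, rfl⟩ | ⟨y, hy, rfl⟩
      · obtain ⟨d, hd, hyd⟩ := ih y hy
        exact ⟨d / 3, hdiv d hd, by rw [dist_div_three, pow_succ]; linarith⟩
      · obtain ⟨d, hd, hyd⟩ := ih y hy
        exact ⟨rightThird d, hright d hd, by rw [dist_rightThird, pow_succ]; linarith⟩
  intro c hc
  refine Metric.mem_closure_iff.2 fun ε hε ↦ ?_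
  obtain ⟨k, hk⟩ := exists_pow_lt_of_lt_one hε (by norm_num : (1 / 3 : ℝ) < 1)
  obtain ⟨d, hd, hcd⟩ := approx k c hc
  exact ⟨d, hd, hcd.trans_lt hk⟩

noncomputable def thompsonX0Fun (x : ℝ) : ℝ :=
  if x ≤ 0 then x else if x ≤ 2 / 3 then x / 3 else if x ≤ 7 / 9 then x - 4 / 9
  else if x ≤ 1 then 3 * x - 2 else x

noncomputable def thompsonX0InvFun (x : ℝ) : ℝ :=
  if x ≤ 0 then x else if x ≤ 2 / 9 then 3 * x else if x ≤ 1 / 3 then x + 4 / 9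
  else if x ≤ 1 then (x + 2) / 3 else x

theorem strictMono_thompsonX0Fun : StrictMono thompsonX0Fun := by
  intro x y h
  unfold thompsonX0Fun
  split_ifs <;> linarith

theorem rightInverse_thompsonX0InvFun : Function.RightInverse thompsonX0InvFun thompsonX0Fun := by
  intro x
  unfold thompsonX0Fun thompsonX0InvFun
  split_ifs <;> linarith

/-- The generator `x₀` of Thompson's group `F` in its action on the Cantor set: on ternary
digits it is `0w ↦ 00w`, `20w ↦ 02w`, `22w ↦ 2w`. -/
noncomputable def thompsonX0 : ℝ ≃o ℝ :=
  strictMono_thompsonX0Fun.orderIsoOfRightInverse _ _ rightInverse_thompsonX0InvFun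

theorem thompsonX0_of_nonpos {x : ℝ} (hx : x ≤ 0) : thompsonX0 x = x :=
  if_pos hx

theorem thompsonX0_of_one_le {x : ℝ} (hx : 1 ≤ x) : thompsonX0 x = x := by
  change thompsonX0Fun x = x
  unfold thompsonX0Fun
  split_ifs <;> linarith

theorem thompsonX0_of_le_two_thirds {x : ℝ} (h0 : 0 ≤ x) (hx : x ≤ 2 / 3) :
    thompsonX0 x = x / 3 := by
  change thompsonX0Fun x = x / 3
  unfold thompsonX0Fun
  split_ifs <;> linarith

theorem thompsonX0_rightThird_div_three {x : ℝ} (hx : x ∈ Icc 0 1) :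
    thompsonX0 (rightThird (x / 3)) = rightThird x / 3 := by
  change thompsonX0Fun _ = _
  simp only [rightThird_apply]
  unfold thompsonX0Fun
  split_ifs <;> linarith [hx.1, hx.2]

theorem thompsonX0_rightThird_rightThird {x : ℝ} (hx : x ∈ Icc 0 1) :
    thompsonX0 (rightThird (rightThird x)) = rightThird x := by
  change thompsonX0Fun _ = _
  simp only [rightThird_apply]
  unfold thompsonX0Fun
  split_ifs <;> linarith [hx.1, hx.2]

theorem image_thompsonX0_cantorSet : thompsonX0 '' cantorSet = cantorSet := by
  have h := cantorSet_eq_div_three_union_rightThird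
  have h01 := @cantorSet_subset_unitInterval
  refine subset_antisymm ?_ fun x hx ↦ ?_
  · rintro _ ⟨x, hx, rfl⟩
    rcases h.subset hx with ⟨y, hy, rfl⟩ | ⟨y, hy, rfl⟩
    · rw [thompsonX0_of_le_two_thirds (by linarith [(h01 hy).1]) (by linarith [(h01 hy).2])]
      exact div_three_mem_cantorSet (div_three_mem_cantorSet hy)
    rcases h.subset hy with ⟨z, hz, rfl⟩ | ⟨z, hz, rfl⟩
    · rw [thompsonX0_rightThird_div_three (h01 hz)]
      exact div_three_mem_cantorSet (rightThird_mem_cantorSet hz)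
    · rw [thompsonX0_rightThird_rightThird (h01 hz)]
      exact rightThird_mem_cantorSet hz
  · rcases h.subset hx with ⟨y, hy, rfl⟩ | ⟨y, hy, rfl⟩
    · rcases h.subset hy with ⟨z, hz, rfl⟩ | ⟨z, hz, rfl⟩
      · exact ⟨z / 3, div_three_mem_cantorSet hz, thompsonX0_of_le_two_thirds
          (by linarith [(h01 hz).1]) (by linarith [(h01 hz).2])⟩
      · exact ⟨_, rightThird_mem_cantorSet (div_three_mem_cantorSet hz),
          thompsonX0_rightThird_div_three (h01 hz)⟩
    · exact ⟨_, rightThird_mem_cantorSet (rightThird_mem_cantorSet hy),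
        thompsonX0_rightThird_rightThird (h01 hy)⟩

theorem image_thompsonX0_Icc : thompsonX0 '' Icc 0 1 = Icc 0 1 := by
  rw [OrderIso.image_Icc, thompsonX0_of_nonpos le_rfl, thompsonX0_of_one_le le_rfl]

noncomputable def thompsonX1 : ℝ ≃o ℝ := rightThird * thompsonX0 * rightThird⁻¹

theorem thompsonX1_rightThird (x : ℝ) : thompsonX1 (rightThird x) = rightThird (thompsonX0 x) := by
  simp [thompsonX1, RelIso.mul_apply]

theorem thompsonX1_of_le_two_thirds {x : ℝ} (hx : x ≤ 2 / 3) : thompsonX1 x = x := by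
  have hx' : x = rightThird (3 * x - 2) := by rw [rightThird_apply]; ring
  rw [hx', thompsonX1_rightThird, thompsonX0_of_nonpos (by linarith)]

theorem thompsonX1_of_one_le {x : ℝ} (hx : 1 ≤ x) : thompsonX1 x = x := by
  have hx' : x = rightThird (3 * x - 2) := by rw [rightThird_apply]; ring
  rw [hx', thompsonX1_rightThird, thompsonX0_of_one_le (by linarith)]

theorem image_thompsonX1_cantorSet : thompsonX1 '' cantorSet = cantorSet := by
  have h := cantorSet_eq_div_three_union_rightThird
  have hleft : EqOn thompsonX1 id ((· / 3) '' cantorSet) := by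
    rintro _ ⟨x, hx, rfl⟩
    exact thompsonX1_of_le_two_thirds (by linarith [(cantorSet_subset_unitInterval hx).2])
  calc thompsonX1 '' cantorSet
      = thompsonX1 '' ((· / 3) '' cantorSet) ∪ thompsonX1 '' (rightThird '' cantorSet) := by
        rw [← image_union, ← h]
    _ = (· / 3) '' cantorSet ∪ rightThird '' (thompsonX0 '' cantorSet) := by
        simp only [hleft.image_eq_self, image_image, thompsonX1_rightThird]
    _ = cantorSet := by rw [image_thompsonX0_cantorSet, ← h]

theorem image_thompsonX1_Icc : thompsonX1 '' Icc 0 1 = Icc 0 1 := by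
  rw [OrderIso.image_Icc, thompsonX1_of_le_two_thirds (by norm_num), thompsonX1_of_one_le le_rfl]

theorem thompsonX1_thompsonX0_rightThird {y : ℝ} (hy : y ∈ Icc 0 1) :
    thompsonX1 (thompsonX0 (rightThird y)) = thompsonX0 (rightThird (thompsonX1 y)) := by
  rcases le_total y (2 / 3) with hy₂ | hy₂
  · have hle : thompsonX0 (rightThird y) ≤ 2 / 3 := by
      calc thompsonX0 (rightThird y) ≤ thompsonX0 (rightThird (rightThird 0)) := by
            gcongr
            rwa [rightThird_zero]
        _ = 2 / 3 := by rw [thompsonX0_rightThird_rightThird ⟨le_rfl, zero_le_one⟩, rightThird_zero]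
    rw [thompsonX1_of_le_two_thirds hle, thompsonX1_of_le_two_thirds hy₂]
  · obtain ⟨z, rfl⟩ := rightThird.surjective y
    have hz : z ∈ Icc 0 1 := by
      constructor <;> linarith [hy.1, hy.2, rightThird_apply z]
    rw [thompsonX1_rightThird, thompsonX0_rightThird_rightThird hz,
      thompsonX0_rightThird_rightThird (image_thompsonX0_Icc ▸ mem_image_of_mem _ hz),
      thompsonX1_rightThird]

def thompsonF : Subgroup (ℝ ≃o ℝ) := Subgroup.closure {thompsonX0, thompsonX1}

theorem thompsonX0_mem_thompsonF : thompsonX0 ∈ thompsonF := Subgroup.subset_closure (Or.inl rfl)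

theorem thompsonX1_mem_thompsonF : thompsonX1 ∈ thompsonF := Subgroup.subset_closure (Or.inr rfl)

theorem thompsonF_le_realizedOn_conj :
    thompsonF ≤ realizedOn (thompsonF.comap (MulAut.conj rightThird).toMonoidHom) (Icc 0 1) := by
  refine (Subgroup.closure_le _).2 ?_
  rintro _ (rfl | rfl)
  · refine ⟨image_thompsonX0_Icc, thompsonX0, thompsonX1_mem_thompsonF, fun _ _ ↦ rfl⟩
  · refine ⟨image_thompsonX1_Icc,
      rightThird⁻¹ * (thompsonX0⁻¹ * thompsonX1 * thompsonX0) * rightThird, ?_, fun y hy ↦ ?_⟩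
    · simpa [mul_assoc] using (thompsonF.mul_mem (thompsonF.mul_mem
        (thompsonF.inv_mem thompsonX0_mem_thompsonF) thompsonX1_mem_thompsonF)
        thompsonX0_mem_thompsonF)
    · simp [RelIso.mul_apply, thompsonX1_thompsonX0_rightThird hy]

theorem orbitR_thompsonF_subset_Icc : orbitR thompsonF (2 / 3) ⊆ Icc 0 1 :=
  orbitR_subset_of_le_stabilizer (thompsonF_le_realizedOn_conj.trans (realizedOn_le_stabilizer _ _))
    ⟨by norm_num, by norm_num⟩

theorem rightThird_mem_orbitR_thompsonF {y : ℝ} (hy : y ∈ orbitR thompsonF (2 / 3)) :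
    rightThird y ∈ orbitR thompsonF (2 / 3) := by
  obtain ⟨h, hh, rfl⟩ := hy
  obtain ⟨-, k, hk, e⟩ := thompsonF_le_realizedOn_conj hh
  have hk' : rightThird * k * rightThird⁻¹ ∈ thompsonF := hk
  -- `x₀` maps `rightThird (2/3) = 0.22₃` to `2/3 = 0.2₃`.
  have h89 : thompsonX0⁻¹ (2 / 3) = rightThird (2 / 3) := by
    refine (thompsonX0.symm_apply_eq).2 ?_
    rw [← rightThird_zero, thompsonX0_rightThird_rightThird ⟨le_rfl, zero_le_one⟩]
  refine ⟨rightThird * k * rightThird⁻¹ * thompsonX0⁻¹,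
    thompsonF.mul_mem hk' (thompsonF.inv_mem thompsonX0_mem_thompsonF), ?_⟩
  simp only [RelIso.mul_apply, h89, RelIso.inv_apply_self,
    e (show (2 / 3 : ℝ) ∈ Icc 0 1 by norm_num)]

theorem cantorSet_subset_closure_orbitR_thompsonF :
    cantorSet ⊆ closure (orbitR thompsonF (2 / 3)) := by
  set O := orbitR thompsonF (2 / 3)
  have hX0 : ∀ y ∈ O, thompsonX0 y ∈ O := fun y ↦ apply_mem_orbitR thompsonX0_mem_thompsonF
  -- `x₀` acts as `· / 3` only on `[0, 2/3]`; carrying `y / 3` along with `y` gets around this.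
  refine (cantorSet_subset_closure (S := {y | y ∈ O ∧ y / 3 ∈ O}) (a := 2 / 3)
    ⟨mem_orbitR_self _ _, ?_⟩ ⟨by norm_num, by norm_num⟩ ?_ ?_).trans
    (closure_mono fun y hy ↦ hy.1)
  · rw [← thompsonX0_of_le_two_thirds (by norm_num) le_rfl]
    exact hX0 _ (mem_orbitR_self _ _)
  · rintro y ⟨hy, hy₃⟩
    refine ⟨hy₃, ?_⟩
    rw [← thompsonX0_of_le_two_thirds (by linarith [(orbitR_thompsonF_subset_Icc hy).1])
      (by linarith [(orbitR_thompsonF_subset_Icc hy).2])]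
    exact hX0 _ hy₃
  · rintro y ⟨hy, hy₃⟩
    refine ⟨rightThird_mem_orbitR_thompsonF hy, ?_⟩
    rw [← thompsonX0_rightThird_div_three (orbitR_thompsonF_subset_Icc hy)]
    exact hX0 _ (rightThird_mem_orbitR_thompsonF hy₃)

theorem image_CZ_of_image_cantorSet {h : ℝ ≃o ℝ} (hle : ∀ x ≤ 0, h x = x)
    (hge : ∀ x, 1 ≤ x → h x = x) (hC : h '' cantorSet = cantorSet) : h '' CZ = CZ := by
  rw [CZ, image_iUnion, cantorC_eq_cantorSet]
  refine iUnion_congr fun n ↦ ?_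
  rcases lt_trichotomy n 0 with hn | rfl | hn
  · refine EqOn.image_eq_self ?_
    rintro _ ⟨c, hc, rfl⟩
    have : (n : ℝ) ≤ -1 := by exact_mod_cast Int.le_sub_one_of_lt hn
    exact hle _ (by linarith [(cantorSet_subset_unitInterval hc).2])
  · simpa using hC
  · refine EqOn.image_eq_self ?_
    rintro _ ⟨c, hc, rfl⟩
    have : (1 : ℝ) ≤ n := by exact_mod_cast hn
    exact hge _ (by linarith [(cantorSet_subset_unitInterval hc).1])

theorem image_addRight_one_CZ : OrderIso.addRight (1 : ℝ) '' CZ = CZ := by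
  rw [CZ, image_iUnion]
  refine iUnion_congr_of_surjective (· + 1) (add_right_surjective 1) fun n ↦ ?_
  rw [image_image]
  push_cast
  congr! 1 with t
  simp only [OrderIso.addRight_apply]
  ring

theorem addRight_one_zpow_apply (n : ℤ) (x : ℝ) : (OrderIso.addRight (1 : ℝ) ^ n) x = x + n := by
  induction n using Int.induction_on generalizing x with
  | zero => simp
  | succ k ih => rw [zpow_add_one, RelIso.mul_apply, ih]; simp; ring
  | pred k ih =>
    rw [zpow_sub_one, RelIso.mul_apply, ih]
    change x + -1 + _ = _
    push_cast
    ring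

theorem CZ_subset_closure_orbitR {G : Subgroup (ℝ ≃o ℝ)} {x : ℝ}
    (hτ : OrderIso.addRight (1 : ℝ) ∈ G) (hC : cantorSet ⊆ closure (orbitR G x)) :
    CZ ⊆ closure (orbitR G x) := by
  rw [CZ, cantorC_eq_cantorSet]
  refine iUnion_subset fun n ↦ ?_
  have htrans : (fun t ↦ (n : ℝ) + t) '' orbitR G x ⊆ orbitR G x := by
    rintro _ ⟨y, hy, rfl⟩
    have := apply_mem_orbitR (zpow_mem hτ n) hy
    rwa [addRight_one_zpow_apply, add_comm] at this
  exact (image_mono hC).trans ((image_closure_subset_closure_image (continuous_const_add _)).trans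
    (closure_mono htrans))

theorem intCast_nonpos_or_one_le (m : ℤ) : (m : ℝ) ≤ 0 ∨ 1 ≤ (m : ℝ) := by
  rcases le_or_gt m 0 with h | h
  · exact Or.inl (by exact_mod_cast h)
  · exact Or.inr (by exact_mod_cast h)

theorem mem_stabilizer_range_intCast {h : ℝ ≃o ℝ} (hh : ∀ m : ℤ, h m = m + 1) :
    h ∈ stabilizer (ℝ ≃o ℝ) (range ((↑) : ℤ → ℝ)) := by
  rw [mem_stabilizer_iff_image_eq, ← range_comp]
  have : ⇑h ∘ ((↑) : ℤ → ℝ) = (↑) ∘ (· + 1) := funext fun m ↦ by simp [hh]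
  rw [this, (add_right_surjective 1).range_comp]

theorem two_thirds_notMem_range_intCast : (2 / 3 : ℝ) ∉ range ((↑) : ℤ → ℝ) := by
  rintro ⟨m, hm⟩
  have h0 : 0 < m := by exact_mod_cast hm ▸ (by norm_num : (0 : ℝ) < 2 / 3)
  have h1 : m < 1 := by exact_mod_cast hm ▸ (by norm_num : (2 / 3 : ℝ) < 1)
  omega

theorem thompsonX0_intCast (m : ℤ) : thompsonX0 m = m :=
  (intCast_nonpos_or_one_le m).elim thompsonX0_of_nonpos thompsonX0_of_one_le

theorem thompsonX1_intCast (m : ℤ) : thompsonX1 m = m :=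
  (intCast_nonpos_or_one_le m).elim (fun h ↦ thompsonX1_of_le_two_thirds (by linarith))
    thompsonX1_of_one_le

noncomputable def cantorShift : ℝ ≃o ℝ :=
  OrderIso.addRight 1 * (OrderIso.addRight 1 * thompsonX1 * (OrderIso.addRight 1)⁻¹) * thompsonX0

theorem cantorShift_apply (x : ℝ) : cantorShift x = thompsonX1 (thompsonX0 x - 1) + 2 := by
  change thompsonX1 (thompsonX0 x + -1) + 1 + 1 = _
  ring_nf

theorem cantorShift_intCast (m : ℤ) : cantorShift m = m + 1 := by
  rw [cantorShift_apply, thompsonX0_intCast, ← Int.cast_one, ← Int.cast_sub, thompsonX1_intCast]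
  push_cast
  ring

theorem image_cantorShift_Icc (n : ℤ) :
    cantorShift '' Icc (n : ℝ) (n + 1) = Icc ((n : ℝ) + 1) (n + 2) := by
  rw [OrderIso.image_Icc, cantorShift_intCast, ← Int.cast_one, ← Int.cast_add, cantorShift_intCast]
  push_cast
  ring_nf

theorem cantorShift_mem_stabilizer_CZ : cantorShift ∈ stabilizer (ℝ ≃o ℝ) CZ := by
  have hτ : OrderIso.addRight (1 : ℝ) ∈ stabilizer (ℝ ≃o ℝ) CZ :=
    mem_stabilizer_iff_image_eq.2 image_addRight_one_CZ
  have hX0 : thompsonX0 ∈ stabilizer (ℝ ≃o ℝ) CZ :=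
    mem_stabilizer_iff_image_eq.2 (image_CZ_of_image_cantorSet (fun _ ↦ thompsonX0_of_nonpos)
      (fun _ ↦ thompsonX0_of_one_le) image_thompsonX0_cantorSet)
  have hX1 : thompsonX1 ∈ stabilizer (ℝ ≃o ℝ) CZ :=
    mem_stabilizer_iff_image_eq.2 (image_CZ_of_image_cantorSet
      (fun _ hx ↦ thompsonX1_of_le_two_thirds (by linarith))
      (fun _ ↦ thompsonX1_of_one_le) image_thompsonX1_cantorSet)
  exact mul_mem (mul_mem hτ (mul_mem (mul_mem hτ hX1) (inv_mem hτ))) hX0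

theorem thompsonF_le_realizedOn_cantorShift :
    thompsonF ≤ realizedOn (Subgroup.closure {cantorShift, OrderIso.addRight 1}) (Icc 0 1) := by
  have hf : cantorShift ∈ Subgroup.closure {cantorShift, OrderIso.addRight (1 : ℝ)} :=
    Subgroup.subset_closure (Or.inl rfl)
  have hτ : OrderIso.addRight (1 : ℝ) ∈ Subgroup.closure {cantorShift, OrderIso.addRight 1} :=
    Subgroup.subset_closure (Or.inr rfl)
  refine (Subgroup.closure_le _).2 ?_
  rintro _ (rfl | rfl)
  · refine ⟨image_thompsonX0_Icc, OrderIso.addRight 1 ^ (-1 : ℤ) * cantorShift,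
      mul_mem (zpow_mem hτ _) hf, fun x hx ↦ ?_⟩
    have hx₀ := image_thompsonX0_Icc ▸ mem_image_of_mem thompsonX0 hx
    rw [RelIso.mul_apply, addRight_one_zpow_apply, cantorShift_apply,
      thompsonX1_of_le_two_thirds (by linarith [hx₀.2])]
    push_cast
    ring
  · refine ⟨image_thompsonX1_Icc,
      OrderIso.addRight 1 ^ (-2 : ℤ) * cantorShift * OrderIso.addRight 1, mul_mem (mul_mem (zpow_mem hτ _) hf) hτ, fun x hx ↦ ?_⟩
    rw [RelIso.mul_apply, RelIso.mul_apply, addRight_one_zpow_apply, cantorShift_apply,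
      OrderIso.addRight_apply, thompsonX0_of_one_le (by linarith [hx.1])]
    push_cast
    ring_nf

/-- With `g` the translation `t ↦ t + 1`, there is an increasing
homeomorphism `f` of `ℝ` preserving `C = ⋃ₙ (n + C₀)` with `f([n,n+1]) = [n+1,n+2]` for all
`n`, such that for the group `G` generated by `f` and `g`, the orbit of `0` is `ℤ` and some
`x₀ ∈ C₀ ∖ ℤ` has orbit dense in `C`. -/
theorem stmt11 : ∃ f : ℝ ≃o ℝ,
    ⇑f '' CZ = CZ ∧
    (∀ n : ℤ, ⇑f '' Set.Icc (n : ℝ) ((n : ℝ) + 1) = Set.Icc ((n : ℝ) + 1) ((n : ℝ) + 2)) ∧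
    ∀ G : Subgroup (ℝ ≃o ℝ), G = Subgroup.closure {f, OrderIso.addRight (1 : ℝ)} →
      orbitR G 0 = Set.range ((↑) : ℤ → ℝ) ∧
      ∃ x₀ ∈ cantorC, x₀ ∉ Set.range ((↑) : ℤ → ℝ) ∧
        orbitR G x₀ ⊆ CZ ∧ CZ ⊆ closure (orbitR G x₀) := by
  refine ⟨cantorShift, mem_stabilizer_iff_image_eq.1 cantorShift_mem_stabilizer_CZ,
    image_cantorShift_Icc, ?_⟩
  rintro G rfl
  have hτ : OrderIso.addRight (1 : ℝ) ∈ Subgroup.closure {cantorShift, OrderIso.addRight 1} :=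
    Subgroup.subset_closure (Or.inr rfl)
  refine ⟨subset_antisymm ?_ ?_, 2 / 3, ?_, ?_, ?_, ?_⟩
  · refine orbitR_subset_of_le_stabilizer ((Subgroup.closure_le _).2 ?_) ⟨0, Int.cast_zero⟩
    rintro _ (rfl | rfl)
    exacts [mem_stabilizer_range_intCast cantorShift_intCast,
      mem_stabilizer_range_intCast fun m ↦ rfl]
  · rintro _ ⟨m, rfl⟩
    exact ⟨_, zpow_mem hτ m, by rw [addRight_one_zpow_apply, zero_add]⟩
  · exact two_thirds_mem_cantorC
  · exact two_thirds_notMem_range_intCast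
  · refine orbitR_subset_of_le_stabilizer ((Subgroup.closure_le _).2 ?_) ?_
    · rintro _ (rfl | rfl)
      exacts [cantorShift_mem_stabilizer_CZ, mem_stabilizer_iff_image_eq.2 image_addRight_one_CZ]
    · exact mem_iUnion.2 ⟨0, 2 / 3, two_thirds_mem_cantorC, by simp⟩
  · exact CZ_subset_closure_orbitR hτ (cantorSet_subset_closure_orbitR_thompsonF.trans
      (closure_mono (orbitR_subset_of_le_realizedOn thompsonF_le_realizedOn_cantorShift
        ⟨by norm_num, by norm_num⟩)))
end

section
/- For every integer n ≥ 1 there exist a group G of orientation-preserving homeomorphisms of [0,1] generated by n elements, and points z¹, …, zⁿ ∈ (0,1), such that: the set of accumulation points of the G-orbit of z¹ is exactly {0, 1}; and for each 1 ≤ k ≤ n − 1, the G-orbit of z^{k+1} is disjoint from the closure of the G-orbit of z^k, and the set of accumulation points of the G-orbit of z^{k+1} is exactly the closure of the G-orbit of z^k. (In particular G admits a level n orbit: a nested chain of n orbits, each accumulating exactly on the closure of the previous one.) -/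
open Set Topology Filter

/-- Orientation-preserving homeomorphisms of `[0,1]`, i.e. increasing homeomorphisms of
`[0,1]` onto itself, are exactly the order isomorphisms of the unit interval
(an increasing bijection of `[0,1]` is automatically a homeomorphism). -/
abbrev IntervalHomeo := unitInterval ≃o unitInterval

/-- The `G`-orbit of a point `x`. -/
def orbit (G : Subgroup IntervalHomeo) (x : unitInterval) : Set unitInterval :=
  {y | ∃ g ∈ G, g x = y}

/-- A set `M` is `G`-invariant if `g(M) = M` for every `g ∈ G`. -/
def Invariant (G : Subgroup IntervalHomeo) (M : Set unitInterval) : Prop :=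
  ∀ g ∈ G, ⇑(g : IntervalHomeo) '' M = M

/-- The open interval `(0,1)` inside `[0,1]`. -/
def openI : Set unitInterval := {x | (x : ℝ) ∈ Set.Ioo (0 : ℝ) 1}

/-- `M` is contained in `S` and closed in the subspace topology of `S`. -/
def ClosedIn (S M : Set unitInterval) : Prop := M ⊆ S ∧ closure M ∩ S ⊆ M

/-!
Conjugating by the sigmoid `σ : ℝ → (0, 1)` and extending by the identity turns order
automorphisms of `ℝ` into order automorphisms of `[0, 1]`, and also into order automorphisms of
`ℝ` supported in `(0, 1)`. Applying the second operation `j` times to the unit translation gives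
`τ_j`; the generators are `τ_0, …, τ_{n-1}` transported to `[0, 1]`.

In the coordinate `σ`, the orbit of `z^{k+1}` is `σ(D_k)`, where `D_0 = ℤ` and
`D_{k+1} = ℤ + σ(D_k)`: every `τ_j` preserves every `D_k`, and words in `τ_0, …, τ_k` reach all
of `D_k` from `σ^k(0)`. Write `A'` for the derived set. Since `D_k` is unbounded in both
directions, `σ(D_k)' = σ(D_k') ∪ {0, 1}`, and since the integer translates of a subset of
`[0, 1]` form a locally finite family, `(ℤ + S)' = ℤ + S'`. By induction `D_{k+1}' = closure D_k`,
and `D_k ∩ D_k' = ∅` because `ℤ + S` and `ℤ + T` are disjoint for disjoint `S ⊆ (0, 1)` and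
`T ⊆ [0, 1]`.
-/

noncomputable section

namespace Set.OrdConnected

variable {α : Type*} [LinearOrder α] {s : Set α} {a b x : α}

lemma le_of_le_of_notMem (hs : s.OrdConnected) (ha : a ∈ s) (hb : b ∈ s) (hx : x ∉ s)
    (hxa : x ≤ a) : x ≤ b :=
  le_of_not_gt fun hbx => hx (hs.out hb ha ⟨hbx.le, hxa⟩)

lemma le_of_ge_of_notMem (hs : s.OrdConnected) (ha : a ∈ s) (hb : b ∈ s) (hx : x ∉ s)
    (hax : a ≤ x) : b ≤ x :=
  le_of_not_gt fun hxb => hx (hs.out ha hb ⟨hax, hxb.le⟩)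

end Set.OrdConnected

namespace OrderIso

variable {α β : Type*} {g : β → α}

open Classical in
def extendConjFun (g : β → α) (f : β → β) (x : α) : α :=
  if hx : x ∈ range g then g (f hx.choose) else x

lemma extendConjFun_apply_self (hg : Function.Injective g) (f : β → β) (y : β) :
    extendConjFun g f (g y) = g (f y) := by
  have hy : g y ∈ range g := mem_range_self y
  rw [extendConjFun, dif_pos hy, hg hy.choose_spec]

lemma extendConjFun_of_notMem (f : β → β) {x : α} (hx : x ∉ range g) :
    extendConjFun g f x = x :=
  dif_neg hx

lemma extendConjFun_id (hg : Function.Injective g) : extendConjFun g id = id := by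
  funext x
  by_cases hx : x ∈ range g
  · obtain ⟨y, rfl⟩ := hx
    exact extendConjFun_apply_self hg id y
  · exact extendConjFun_of_notMem id hx

lemma extendConjFun_comp (hg : Function.Injective g) (f f' : β → β) :
    extendConjFun g (f ∘ f') = extendConjFun g f ∘ extendConjFun g f' := by
  funext x
  by_cases hx : x ∈ range g
  · obtain ⟨y, rfl⟩ := hx
    simp only [Function.comp_apply, extendConjFun_apply_self hg]
  · simp only [Function.comp_apply, extendConjFun_of_notMem _ hx]

variable [LinearOrder α] [LinearOrder β]

lemma monotone_extendConjFun (hg : StrictMono g) (hs : (range g).OrdConnected) {f : β → β}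
    (hf : Monotone f) : Monotone (extendConjFun g f) := by
  intro x x' hxx'
  by_cases hx : x ∈ range g <;> by_cases hx' : x' ∈ range g
  · obtain ⟨y, rfl⟩ := hx
    obtain ⟨y', rfl⟩ := hx'
    simp only [extendConjFun_apply_self hg.injective]
    exact hg.monotone (hf (hg.le_iff_le.mp hxx'))
  · obtain ⟨y, rfl⟩ := hx
    rw [extendConjFun_apply_self hg.injective, extendConjFun_of_notMem f hx']
    exact hs.le_of_ge_of_notMem (mem_range_self y) (mem_range_self _) hx' hxx'
  · obtain ⟨y', rfl⟩ := hx'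
    rw [extendConjFun_apply_self hg.injective, extendConjFun_of_notMem f hx]
    exact hs.le_of_le_of_notMem (mem_range_self y') (mem_range_self _) hx hxx'
  · rwa [extendConjFun_of_notMem f hx, extendConjFun_of_notMem f hx']

def extendConj (hg : StrictMono g) (hs : (range g).OrdConnected) : (β ≃o β) →* (α ≃o α) where
  toFun f := Equiv.toOrderIso
    { toFun := extendConjFun g f
      invFun := extendConjFun g f.symm
      left_inv x := by
        rw [← Function.comp_apply (f := extendConjFun g f.symm), ← extendConjFun_comp hg.injective,
          (funext f.symm_apply_apply : ⇑f.symm ∘ ⇑f = id), extendConjFun_id hg.injective, id]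
      right_inv x := by
        rw [← Function.comp_apply (f := extendConjFun g f), ← extendConjFun_comp hg.injective,
          (funext f.apply_symm_apply : ⇑f ∘ ⇑f.symm = id), extendConjFun_id hg.injective, id] }
    (monotone_extendConjFun hg hs f.monotone) (monotone_extendConjFun hg hs f.symm.monotone)
  map_one' := by
    ext x
    exact congrFun (extendConjFun_id hg.injective) x
  map_mul' f f' := by
    ext x
    exact congrFun (extendConjFun_comp hg.injective f f') x

variable (hg : StrictMono g) (hs : (range g).OrdConnected)

lemma extendConj_apply_self (f : β ≃o β) (y : β) : extendConj hg hs f (g y) = g (f y) :=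
  extendConjFun_apply_self hg.injective f y

lemma extendConj_apply_of_notMem (f : β ≃o β) {x : α} (hx : x ∉ range g) :
    extendConj hg hs f x = x :=
  extendConjFun_of_notMem f hx

lemma extendConj_injective : Function.Injective (extendConj hg hs) := fun f f' h =>
  OrderIso.ext <| funext fun y => hg.injective <| by
    rw [← extendConj_apply_self hg hs, h, extendConj_apply_self hg hs]

end OrderIso

lemma derivedSet_singleton {X : Type*} [TopologicalSpace X] [T1Space X] (x : X) :
    derivedSet {x} = ∅ :=
  eq_empty_of_forall_notMem fun _ h => Set.Infinite.of_accPt h (finite_singleton x)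

lemma LocallyFinite.derivedSet_iUnion {ι X : Type*} [TopologicalSpace X] {f : ι → Set X}
    (hf : LocallyFinite f) : derivedSet (⋃ i, f i) = ⋃ i, derivedSet (f i) := by
  have key (s : Set X) (x : X) : x ∈ derivedSet s ↔ x ∈ closure (s \ {x}) := by
    rw [mem_derivedSet, accPt_principal_iff_clusterPt, mem_closure_iff_clusterPt]
  ext x
  simp only [mem_iUnion, key, iUnion_sdiff, (hf.subset fun i => sdiff_subset).closure_iUnion]

namespace Topology.IsOpenEmbedding

variable {X Y : Type*} [TopologicalSpace X] [TopologicalSpace Y] {f : X → Y}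

lemma image_derivedSet (hf : IsOpenEmbedding f) (A : Set X) :
    f '' derivedSet A = derivedSet (f '' A) ∩ range f := by
  refine subset_antisymm (fun y hy => ⟨hf.continuous.image_derivedSet hf.injective hy,
    image_subset_range _ _ hy⟩) ?_
  rintro _ ⟨hy, x, rfl⟩
  refine ⟨x, ?_, rfl⟩
  rw [mem_derivedSet, accPt_iff_frequently, ← hf.map_nhds_eq, frequently_map] at hy
  rw [mem_derivedSet, accPt_iff_frequently]
  simpa only [hf.injective.ne_iff, hf.injective.mem_set_image] using hy

lemma disjoint_image_derivedSet (hf : IsOpenEmbedding f) {A : Set X}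
    (hA : Disjoint A (derivedSet A)) : Disjoint (f '' A) (derivedSet (f '' A)) := by
  rw [disjoint_left]
  rintro _ ⟨x, hx, rfl⟩ hd
  have : f x ∈ f '' derivedSet A := by
    rw [hf.image_derivedSet]
    exact ⟨hd, mem_range_self x⟩
  exact disjoint_left.mp hA hx (hf.injective.mem_set_image.mp this)

variable [LinearOrder Y] [OrderClosedTopology Y] {g : ℝ → Y} {a b : Y} {A : Set ℝ}

theorem derivedSet_image_of_unbounded (hg : IsOpenEmbedding g) (hrange : range g = Ioo a b)
    (ha : Tendsto g atBot (𝓝 a)) (hb : Tendsto g atTop (𝓝 b))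
    (hbot : ¬BddBelow A) (htop : ¬BddAbove A) :
    derivedSet (g '' A) = g '' derivedSet A ∪ {a, b} := by
  have endpoint {l : Filter ℝ} {c : Y} (hA : ∃ᶠ u in l, u ∈ A) (hc : Tendsto g l (𝓝 c))
      (hcg : c ∉ range g) : c ∈ derivedSet (g '' A) :=
    accPt_iff_frequently.mpr <| hc.frequently <|
      hA.mono fun u hu => ⟨fun h => hcg ⟨u, h⟩, mem_image_of_mem g hu⟩
  refine subset_antisymm (fun y hy => ?_) ?_
  · by_cases hyg : y ∈ range g
    · exact Or.inl (hg.image_derivedSet A ▸ ⟨hy, hyg⟩)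
    · have hy' : y ∈ Icc a b := closure_minimal
        ((image_subset_range g A).trans (hrange ▸ Ioo_subset_Icc_self)) isClosed_Icc
        (derivedSet_subset_closure _ hy)
      rw [hrange] at hyg
      exact Or.inr (Icc_sdiff_Ioo_same (hy'.1.trans hy'.2) ▸ ⟨hy', hyg⟩)
  · rintro y (hy | rfl | rfl)
    · exact (hg.image_derivedSet A ▸ hy).1
    · refine endpoint (frequently_atBot.mpr fun x => ?_) ha (by simp [hrange])
      obtain ⟨u, hu, hux⟩ := not_bddBelow_iff.mp hbot x
      exact ⟨u, hux.le, hu⟩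
    · refine endpoint (frequently_atTop.mpr fun x => ?_) hb (by simp [hrange])
      obtain ⟨u, hu, hux⟩ := not_bddAbove_iff.mp htop x
      exact ⟨u, hux.le, hu⟩

theorem closure_image_of_unbounded (hg : IsOpenEmbedding g) (hrange : range g = Ioo a b)
    (ha : Tendsto g atBot (𝓝 a)) (hb : Tendsto g atTop (𝓝 b))
    (hbot : ¬BddBelow A) (htop : ¬BddAbove A) :
    closure (g '' A) = g '' closure A ∪ {a, b} := by
  rw [closure_eq_self_union_derivedSet, closure_eq_self_union_derivedSet,
    hg.derivedSet_image_of_unbounded hrange ha hb hbot htop, image_union, union_assoc]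

end Topology.IsOpenEmbedding

lemma Homeomorph.image_derivedSet {X Y : Type*} [TopologicalSpace X] [TopologicalSpace Y]
    (e : X ≃ₜ Y) (A : Set X) : e '' derivedSet A = derivedSet (e '' A) := by
  rw [e.isOpenEmbedding.image_derivedSet, e.range_coe, inter_univ]

lemma Real.isOpenEmbedding_sigmoid : IsOpenEmbedding Real.sigmoid :=
  isOpenEmbedding_iff _ |>.mpr
    ⟨IsEmbedding.subtypeVal.comp isEmbedding_sigmoid, Real.range_sigmoid ▸ isOpen_Ioo⟩

lemma unitInterval.isOpenEmbedding_sigmoid : IsOpenEmbedding unitInterval.sigmoid :=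
  isOpenEmbedding_iff _ |>.mpr ⟨isEmbedding_sigmoid, unitInterval.range_sigmoid ▸ isOpen_Ioo⟩

def intTranslates (S : Set ℝ) : Set ℝ := ⋃ m : ℤ, (· + (m : ℝ)) '' S

section intTranslates

variable {S T : Set ℝ} {x : ℝ}

lemma mem_intTranslates : x ∈ intTranslates S ↔ ∃ m : ℤ, x - m ∈ S := by
  simp only [intTranslates, mem_iUnion, mem_image, ← eq_sub_iff_add_eq, exists_eq_right]

lemma add_intCast_mem_intTranslates (m : ℤ) : x + m ∈ intTranslates S ↔ x ∈ intTranslates S := by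
  simp only [mem_intTranslates]
  constructor
  · rintro ⟨m', h⟩
    exact ⟨m' - m, by push_cast; convert h using 1; ring⟩
  · rintro ⟨m', h⟩
    exact ⟨m' + m, by push_cast; convert h using 1; ring⟩

lemma mem_intTranslates_iff_of_mem_Ioo (hS : S ⊆ Icc 0 1) (hx : x ∈ Ioo 0 1) :
    x ∈ intTranslates S ↔ x ∈ S := by
  refine ⟨fun h => ?_, fun h => mem_intTranslates.mpr ⟨0, by simpa using h⟩⟩
  obtain ⟨m, hm⟩ := mem_intTranslates.mp h
  have hm' := hS hm
  have : |(m : ℝ)| < 1 := abs_lt.mpr ⟨by linarith [hx.1, hm'.2], by linarith [hx.2, hm'.1]⟩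
  have : m = 0 := Int.abs_lt_one_iff.mp (by exact_mod_cast this)
  simpa [this] using hm

lemma disjoint_intTranslates (hS : S ⊆ Ioo 0 1) (hT : T ⊆ Icc 0 1) (hST : Disjoint S T) :
    Disjoint (intTranslates S) (intTranslates T) := by
  rw [disjoint_left]
  intro x hxS hxT
  obtain ⟨m, hm⟩ := mem_intTranslates.mp hxS
  have : x - m ∈ intTranslates T := by
    simpa [sub_eq_add_neg] using (add_intCast_mem_intTranslates (-m)).mpr hxT
  exact disjoint_left.mp hST hm ((mem_intTranslates_iff_of_mem_Ioo hT (hS hm)).mp this)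

lemma intTranslates_pair : intTranslates {0, 1} = intTranslates {0} := by
  ext x
  simp only [mem_intTranslates, mem_insert_iff, mem_singleton_iff]
  refine ⟨fun ⟨m, h⟩ => h.elim (fun h => ⟨m, h⟩) fun h => ⟨m + 1, ?_⟩, fun ⟨m, h⟩ => ⟨m, .inl h⟩⟩
  push_cast
  linarith

lemma not_bddBelow_intTranslates (hS : S.Nonempty) : ¬BddBelow (intTranslates S) := by
  obtain ⟨s, hs⟩ := hS
  refine not_bddBelow_iff.mpr fun x => ?_
  obtain ⟨m, hm⟩ := exists_int_lt (x - s)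
  exact ⟨s + m, mem_iUnion.mpr ⟨m, s, hs, rfl⟩, by linarith⟩

lemma not_bddAbove_intTranslates (hS : S.Nonempty) : ¬BddAbove (intTranslates S) := by
  obtain ⟨s, hs⟩ := hS
  refine not_bddAbove_iff.mpr fun x => ?_
  obtain ⟨m, hm⟩ := exists_int_gt (x - s)
  exact ⟨s + m, mem_iUnion.mpr ⟨m, s, hs, rfl⟩, by linarith⟩

lemma locallyFinite_intTranslates (hS : S ⊆ Icc 0 1) :
    LocallyFinite fun m : ℤ => (· + (m : ℝ)) '' S := by
  intro x
  refine ⟨Ioo (x - 1) (x + 1), Ioo_mem_nhds (by linarith) (by linarith),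
    (finite_Icc (⌊x⌋ - 2) (⌊x⌋ + 2)).subset ?_⟩
  rintro m ⟨_, ⟨s, hs, rfl⟩, hlo, hhi⟩
  have hs' := hS hs
  have := Int.floor_le x
  have := Int.lt_floor_add_one x
  have hlo' : ((⌊x⌋ - 2 : ℤ) : ℝ) < m := by push_cast; linarith [hs'.2]
  have hhi' : (m : ℝ) < ((⌊x⌋ + 2 : ℤ) : ℝ) := by push_cast; linarith [hs'.1]
  exact ⟨(Int.cast_lt.mp hlo').le, (Int.cast_lt.mp hhi').le⟩

lemma derivedSet_intTranslates (hS : S ⊆ Icc 0 1) :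
    derivedSet (intTranslates S) = intTranslates (derivedSet S) := by
  rw [intTranslates, (locallyFinite_intTranslates hS).derivedSet_iUnion]
  exact iUnion_congr fun m => ((Homeomorph.addRight (m : ℝ)).image_derivedSet S).symm

lemma closure_intTranslates (hS : S ⊆ Icc 0 1) :
    closure (intTranslates S) = intTranslates (closure S) := by
  rw [intTranslates, (locallyFinite_intTranslates hS).closure_iUnion]
  exact iUnion_congr fun m => ((Homeomorph.addRight (m : ℝ)).image_closure S).symm

end intTranslates

def levelOrbit : ℕ → Set ℝ
  | 0 => intTranslates {0}
  | k + 1 => intTranslates (Real.sigmoid '' levelOrbit k)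

lemma sigmoid_image_subset_Ioo (A : Set ℝ) : Real.sigmoid '' A ⊆ Ioo 0 1 :=
  Real.range_sigmoid ▸ image_subset_range _ _

lemma closure_sigmoid_image_subset_Icc (A : Set ℝ) : closure (Real.sigmoid '' A) ⊆ Icc 0 1 :=
  closure_minimal ((sigmoid_image_subset_Ioo A).trans Ioo_subset_Icc_self) isClosed_Icc

lemma sigmoid_image_subset_Icc (A : Set ℝ) : Real.sigmoid '' A ⊆ Icc 0 1 :=
  subset_closure.trans (closure_sigmoid_image_subset_Icc A)

lemma iterate_sigmoid_mem_levelOrbit : ∀ k, Real.sigmoid^[k] 0 ∈ levelOrbit k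
  | 0 => mem_intTranslates.mpr ⟨0, by simp⟩
  | k + 1 => mem_intTranslates.mpr ⟨0, by
      simpa [Function.iterate_succ_apply'] using
        mem_image_of_mem Real.sigmoid (iterate_sigmoid_mem_levelOrbit k)⟩

lemma not_bddBelow_levelOrbit : ∀ k, ¬BddBelow (levelOrbit k)
  | 0 => not_bddBelow_intTranslates (singleton_nonempty 0)
  | k + 1 => not_bddBelow_intTranslates ⟨_, mem_image_of_mem _ (iterate_sigmoid_mem_levelOrbit k)⟩

lemma not_bddAbove_levelOrbit : ∀ k, ¬BddAbove (levelOrbit k)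
  | 0 => not_bddAbove_intTranslates (singleton_nonempty 0)
  | k + 1 => not_bddAbove_intTranslates ⟨_, mem_image_of_mem _ (iterate_sigmoid_mem_levelOrbit k)⟩

lemma derivedSet_levelOrbit_zero : derivedSet (levelOrbit 0) = ∅ := by
  rw [levelOrbit, derivedSet_intTranslates (by simp), derivedSet_singleton]
  simp [intTranslates]

lemma closure_levelOrbit_zero : closure (levelOrbit 0) = levelOrbit 0 := by
  rw [closure_eq_self_union_derivedSet, derivedSet_levelOrbit_zero, union_empty]

lemma derivedSet_levelOrbit_succ (k : ℕ) :
    derivedSet (levelOrbit (k + 1)) =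
      intTranslates (Real.sigmoid '' derivedSet (levelOrbit k) ∪ {0, 1}) := by
  rw [levelOrbit, derivedSet_intTranslates (sigmoid_image_subset_Icc _),
    Real.isOpenEmbedding_sigmoid.derivedSet_image_of_unbounded Real.range_sigmoid
      Real.tendsto_sigmoid_atBot Real.tendsto_sigmoid_atTop (not_bddBelow_levelOrbit k)
      (not_bddAbove_levelOrbit k)]

lemma closure_levelOrbit_succ (k : ℕ) :
    closure (levelOrbit (k + 1)) =
      intTranslates (Real.sigmoid '' closure (levelOrbit k) ∪ {0, 1}) := by
  rw [levelOrbit, closure_intTranslates (sigmoid_image_subset_Icc _),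
    Real.isOpenEmbedding_sigmoid.closure_image_of_unbounded Real.range_sigmoid
      Real.tendsto_sigmoid_atBot Real.tendsto_sigmoid_atTop (not_bddBelow_levelOrbit k)
      (not_bddAbove_levelOrbit k)]

theorem derivedSet_levelOrbit_succ_eq_closure (k : ℕ) :
    derivedSet (levelOrbit (k + 1)) = closure (levelOrbit k) := by
  induction k with
  | zero =>
    rw [derivedSet_levelOrbit_succ, derivedSet_levelOrbit_zero, image_empty, empty_union,
      intTranslates_pair, closure_levelOrbit_zero, levelOrbit]
  | succ k ih => rw [derivedSet_levelOrbit_succ, ih, closure_levelOrbit_succ]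

theorem disjoint_levelOrbit_derivedSet (k : ℕ) :
    Disjoint (levelOrbit k) (derivedSet (levelOrbit k)) := by
  induction k with
  | zero => simp [derivedSet_levelOrbit_zero]
  | succ k ih =>
    rw [levelOrbit, derivedSet_intTranslates (sigmoid_image_subset_Icc _)]
    exact disjoint_intTranslates (sigmoid_image_subset_Ioo _)
      ((derivedSet_subset_closure _).trans (closure_sigmoid_image_subset_Icc _))
      (Real.isOpenEmbedding_sigmoid.disjoint_image_derivedSet ih)

def insetHom : (ℝ ≃o ℝ) →* (ℝ ≃o ℝ) :=
  OrderIso.extendConj Real.sigmoid_strictMono (Real.range_sigmoid ▸ ordConnected_Ioo)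

def toIntervalHomeo : (ℝ ≃o ℝ) →* IntervalHomeo :=
  OrderIso.extendConj unitInterval.sigmoid_strictMono
    (unitInterval.range_sigmoid ▸ ordConnected_Ioo)

lemma insetHom_apply_sigmoid (h : ℝ ≃o ℝ) (u : ℝ) :
    insetHom h (Real.sigmoid u) = Real.sigmoid (h u) :=
  OrderIso.extendConj_apply_self _ _ h u

lemma insetHom_apply_of_notMem (h : ℝ ≃o ℝ) {x : ℝ} (hx : x ∉ Ioo 0 1) : insetHom h x = x :=
  OrderIso.extendConj_apply_of_notMem _ _ h (Real.range_sigmoid ▸ hx)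

lemma toIntervalHomeo_apply_sigmoid (h : ℝ ≃o ℝ) (u : ℝ) :
    toIntervalHomeo h (unitInterval.sigmoid u) = unitInterval.sigmoid (h u) :=
  OrderIso.extendConj_apply_self _ _ h u

def levelShift (j : ℕ) : ℝ ≃o ℝ := insetHom^[j] (OrderIso.addRight 1)

lemma levelShift_succ (j : ℕ) : levelShift (j + 1) = insetHom (levelShift j) :=
  Function.iterate_succ_apply' _ _ _

lemma levelShift_zero_zpow_apply (m : ℤ) (x : ℝ) : (levelShift 0 ^ m) x = x + m := by
  induction m using Int.induction_on generalizing x with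
  | zero => simp
  | succ i ih =>
    rw [zpow_add_one, RelIso.mul_apply, ih]
    simp [levelShift]
    ring
  | pred i ih =>
    rw [zpow_sub_one, RelIso.mul_apply, ih]
    change (OrderIso.addRight (1 : ℝ)).symm x + _ = _
    simp
    ring

lemma levelShift_injective : Function.Injective levelShift := by
  have fixes_zero (j : ℕ) : levelShift (j + 1) 0 = 0 := by
    rw [levelShift_succ, insetHom_apply_of_notMem _ (by simp)]
  refine Function.Injective.of_lt_imp_ne fun i j hij heq => ?_
  obtain ⟨l, rfl⟩ := Nat.exists_eq_add_of_lt hij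
  rw [levelShift, levelShift, add_assoc, Function.iterate_add_apply] at heq
  have h : levelShift (l + 1) = OrderIso.addRight 1 :=
    ((OrderIso.extendConj_injective _ _).iterate i heq).symm
  have := fixes_zero l
  rw [h] at this
  norm_num at this

open MulAction Pointwise in
lemma insetHom_mem_stabilizer_intTranslates {S : Set ℝ} (hS : S ⊆ Icc 0 1) {h : ℝ ≃o ℝ}
    (hh : h ∈ stabilizer (ℝ ≃o ℝ) (Real.sigmoid ⁻¹' S)) :
    insetHom h ∈ stabilizer (ℝ ≃o ℝ) (intTranslates S) := by
  rw [mem_stabilizer_set] at hh ⊢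
  intro x
  by_cases hx : x ∈ Ioo 0 1
  · obtain ⟨u, rfl⟩ := Real.range_sigmoid ▸ hx
    rw [RelIso.smul_def, insetHom_apply_sigmoid,
      mem_intTranslates_iff_of_mem_Ioo hS (sigmoid_image_subset_Ioo univ ⟨_, trivial, rfl⟩),
      mem_intTranslates_iff_of_mem_Ioo hS hx]
    exact hh u
  · rw [RelIso.smul_def, insetHom_apply_of_notMem h hx]

open MulAction Pointwise in
lemma levelShift_mem_stabilizer (j k : ℕ) :
    levelShift j ∈ stabilizer (ℝ ≃o ℝ) (levelOrbit k) := by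
  induction j generalizing k with
  | zero =>
    refine mem_stabilizer_set.mpr fun x => ?_
    rw [RelIso.smul_def]
    cases k <;> simpa [levelShift, levelOrbit] using add_intCast_mem_intTranslates (x := x) 1
  | succ j ih =>
    rw [levelShift_succ]
    cases k with
    | zero =>
      refine insetHom_mem_stabilizer_intTranslates (by simp) ?_
      have : Real.sigmoid ⁻¹' {0} = ∅ := by ext; simp [(Real.sigmoid_pos _).ne']
      simp [this]
    | succ k =>
      refine insetHom_mem_stabilizer_intTranslates (sigmoid_image_subset_Icc _) ?_
      rw [preimage_image_eq _ Real.sigmoid_injective]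
      exact ih k

lemma exists_mem_closure_levelShift_apply_eq (k : ℕ) {d : ℝ} (hd : d ∈ levelOrbit k) :
    ∃ h ∈ Subgroup.closure (levelShift '' Iic k), h (Real.sigmoid^[k] 0) = d := by
  have translate_mem (k : ℕ) (m : ℤ) :
      levelShift 0 ^ m ∈ Subgroup.closure (levelShift '' Iic k) :=
    zpow_mem (Subgroup.subset_closure (mem_image_of_mem levelShift (mem_Iic.mpr (Nat.zero_le k)))) m
  induction k generalizing d with
  | zero =>
    obtain ⟨m, hm⟩ := mem_intTranslates.mp hd
    refine ⟨levelShift 0 ^ m, translate_mem 0 m, ?_⟩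
    rw [levelShift_zero_zpow_apply, Function.iterate_zero_apply, zero_add]
    exact (sub_eq_zero.mp hm).symm
  | succ k ih =>
    obtain ⟨m, ⟨d', hd', hmd⟩⟩ := mem_intTranslates.mp hd
    obtain ⟨h, hh, rfl⟩ := ih hd'
    have inset_le : (Subgroup.closure (levelShift '' Iic k)).map insetHom ≤
        Subgroup.closure (levelShift '' Iic (k + 1)) := by
      rw [MonoidHom.map_closure]
      refine Subgroup.closure_mono ?_
      rintro _ ⟨_, ⟨j, hj, rfl⟩, rfl⟩
      exact ⟨j + 1, Nat.succ_le_succ hj, levelShift_succ j⟩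
    have inset_mem := inset_le (Subgroup.mem_map_of_mem insetHom hh)
    refine ⟨levelShift 0 ^ m * insetHom h, mul_mem (translate_mem _ m) inset_mem, ?_⟩
    rw [RelIso.mul_apply, Function.iterate_succ_apply', insetHom_apply_sigmoid,
      levelShift_zero_zpow_apply, hmd, sub_add_cancel]

open MulAction Pointwise in
lemma image_apply_closure_levelShift {k n : ℕ} (hk : k < n) :
    (fun h : ℝ ≃o ℝ => h (Real.sigmoid^[k] 0)) '' Subgroup.closure (levelShift '' Iio n) =
      levelOrbit k := by
  refine subset_antisymm ?_ fun d hd => ?_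
  · rintro _ ⟨h, hh, rfl⟩
    have hstab : Subgroup.closure (levelShift '' Iio n) ≤ stabilizer (ℝ ≃o ℝ) (levelOrbit k) :=
      (Subgroup.closure_le _).mpr (image_subset_iff.mpr fun j _ => levelShift_mem_stabilizer j k)
    exact (mem_stabilizer_set.mp (hstab hh) _).mpr (iterate_sigmoid_mem_levelOrbit k)
  · obtain ⟨h, hh, rfl⟩ := exists_mem_closure_levelShift_apply_eq k hd
    exact ⟨h, Subgroup.closure_mono (image_mono (Iic_subset_Iio.mpr hk)) hh, rfl⟩

lemma orbit_map_toIntervalHomeo (H : Subgroup (ℝ ≃o ℝ)) (x : ℝ) :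
    orbit (H.map toIntervalHomeo) (unitInterval.sigmoid x) =
      unitInterval.sigmoid '' ((fun h : ℝ ≃o ℝ => h x) '' H) := by
  ext y
  simp only [orbit, Subgroup.mem_map, mem_ofPred_eq, mem_image, SetLike.mem_coe]
  constructor
  · rintro ⟨_, ⟨h, hh, rfl⟩, rfl⟩
    exact ⟨h x, ⟨h, hh, rfl⟩, (toIntervalHomeo_apply_sigmoid h x).symm⟩
  · rintro ⟨_, ⟨h, hh, rfl⟩, rfl⟩
    exact ⟨_, ⟨h, hh, rfl⟩, toIntervalHomeo_apply_sigmoid h x⟩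

def generators (n : ℕ) : Finset IntervalHomeo :=
  (Finset.range n).map ⟨fun j => toIntervalHomeo (levelShift j),
    (OrderIso.extendConj_injective _ _).comp levelShift_injective⟩

lemma card_generators (n : ℕ) : (generators n).card = n := by
  simp [generators]

lemma closure_generators (n : ℕ) :
    Subgroup.closure (generators n : Set IntervalHomeo) =
      (Subgroup.closure (levelShift '' Iio n)).map toIntervalHomeo := by
  rw [generators, Finset.coe_map, Finset.coe_range, MonoidHom.map_closure, image_image]
  rfl

theorem orbit_closure_generators {k n : ℕ} (hk : k < n) :
    orbit (Subgroup.closure (generators n : Set IntervalHomeo))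
        (unitInterval.sigmoid (Real.sigmoid^[k] 0)) =
      unitInterval.sigmoid '' levelOrbit k := by
  rw [closure_generators, orbit_map_toIntervalHomeo, image_apply_closure_levelShift hk]

lemma derivedSet_sigmoid_image_levelOrbit (k : ℕ) :
    derivedSet (unitInterval.sigmoid '' levelOrbit k) =
      unitInterval.sigmoid '' derivedSet (levelOrbit k) ∪ {0, 1} :=
  unitInterval.isOpenEmbedding_sigmoid.derivedSet_image_of_unbounded unitInterval.range_sigmoid
    unitInterval.tendsto_sigmoid_atBot unitInterval.tendsto_sigmoid_atTop
    (not_bddBelow_levelOrbit k) (not_bddAbove_levelOrbit k)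

lemma closure_sigmoid_image_levelOrbit (k : ℕ) :
    closure (unitInterval.sigmoid '' levelOrbit k) =
      unitInterval.sigmoid '' closure (levelOrbit k) ∪ {0, 1} :=
  unitInterval.isOpenEmbedding_sigmoid.closure_image_of_unbounded unitInterval.range_sigmoid
    unitInterval.tendsto_sigmoid_atBot unitInterval.tendsto_sigmoid_atTop
    (not_bddBelow_levelOrbit k) (not_bddAbove_levelOrbit k)

end

/-- For every `n ≥ 1` there is a group of orientation-preserving
homeomorphisms of `[0,1]` generated by `n` elements admitting a nested chain of orbits
`O(z¹), …, O(zⁿ)`: the accumulation set of `O(z¹)` is exactly `{0,1}`, and for each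
`1 ≤ k ≤ n-1` the orbit `O(z^{k+1})` is disjoint from the closure of `O(z^k)` and its
accumulation set is exactly that closure. (So `G` admits a level `n` orbit.) -/
theorem stmt12 (n : ℕ) (hn : 1 ≤ n) :
    ∃ (s : Finset IntervalHomeo) (z : ℕ → unitInterval), s.card = n ∧
      ∀ G : Subgroup IntervalHomeo, G = Subgroup.closure (s : Set IntervalHomeo) →
        (∀ k, 1 ≤ k → k ≤ n → z k ∈ openI) ∧
        {p | AccPt p (𝓟 (orbit G (z 1)))} = {0, 1} ∧
        ∀ k, 1 ≤ k → k ≤ n - 1 →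
          Disjoint (orbit G (z (k + 1))) (closure (orbit G (z k))) ∧
          {p | AccPt p (𝓟 (orbit G (z (k + 1))))} = closure (orbit G (z k)) := by
  refine ⟨generators n, fun k => unitInterval.sigmoid (Real.sigmoid^[k - 1] 0),
    card_generators n, ?_⟩
  rintro G rfl
  refine ⟨fun k _ _ => ⟨Real.sigmoid_pos _, Real.sigmoid_lt_one _⟩, ?_, fun k hk1 hkn => ?_⟩
  · change derivedSet (orbit _ (unitInterval.sigmoid (Real.sigmoid^[0] 0))) = _
    rw [orbit_closure_generators hn, derivedSet_sigmoid_image_levelOrbit,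
      derivedSet_levelOrbit_zero, image_empty, empty_union]
  · obtain ⟨j, rfl⟩ : ∃ j, k = j + 1 := ⟨k - 1, by omega⟩
    have hclosure : closure (unitInterval.sigmoid '' levelOrbit j) =
        derivedSet (unitInterval.sigmoid '' levelOrbit (j + 1)) := by
      rw [closure_sigmoid_image_levelOrbit, derivedSet_sigmoid_image_levelOrbit,
        derivedSet_levelOrbit_succ_eq_closure]
    simp only [Nat.add_sub_cancel]
    rw [orbit_closure_generators (by omega), orbit_closure_generators (by omega), hclosure]
    exact ⟨unitInterval.isOpenEmbedding_sigmoid.disjoint_image_derivedSet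
      (disjoint_levelOrbit_derivedSet _), rfl⟩
end

section
/- Let G be a group of orientation-preserving homeomorphisms of [0,1], let z ∈ (0,1), and let I be a connected component of (0,1) ∖ closure(O(z)). Let H = {g ∈ G : g(I) = I}, a subgroup of G. Then for every y ∈ I, O(y) ∩ I = {h(y) : h ∈ H}. -/
open Set Topology Filter

lemma image_openI (e : IntervalHomeo) : ⇑e '' openI = openI := by
  have key : ∀ f : IntervalHomeo, ⇑f '' openI ⊆ openI := by
    rintro f x ⟨a, ha, rfl⟩
    have h0 : f 0 = 0 := f.map_bot
    have h1 : f 1 = 1 := f.map_top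
    have ha0 : (0 : unitInterval) < a := by
      rw [← Subtype.coe_lt_coe]; exact ha.1
    have ha1 : a < (1 : unitInterval) := by
      rw [← Subtype.coe_lt_coe]; exact ha.2
    constructor
    · have := f.strictMono ha0; rw [h0] at this; exact this
    · have := f.strictMono ha1; rw [h1] at this; exact this
  refine (key e).antisymm ?_
  intro x hx
  have : e.symm x ∈ openI := key e.symm ⟨x, hx, rfl⟩
  exact ⟨e.symm x, this, e.apply_symm_apply x⟩

lemma image_orbit (G : Subgroup IntervalHomeo) (z : unitInterval) {g : IntervalHomeo}
    (hg : g ∈ G) : ⇑g '' orbit G z = orbit G z := by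
  ext x
  constructor
  · rintro ⟨a, ⟨k, hk, rfl⟩, rfl⟩
    exact ⟨g * k, mul_mem hg hk, rfl⟩
  · rintro ⟨k, hk, rfl⟩
    exact ⟨(g⁻¹ * k) z, ⟨g⁻¹ * k, mul_mem (inv_mem hg) hk, rfl⟩, by simp⟩

/-- If `I` is a connected component of `(0,1) ∖ closure (O(z))` and
`H = {g ∈ G : g(I) = I}`, then for every `y ∈ I`, `O(y) ∩ I = {h(y) : h ∈ H}`. -/
theorem stmt14 (G : Subgroup IntervalHomeo) (z : unitInterval) (hz : z ∈ openI)
    (I : Set unitInterval)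
    (hI : ∃ w ∈ openI \ closure (orbit G z),
      I = connectedComponentIn (openI \ closure (orbit G z)) w) :
    ∀ y ∈ I, orbit G y ∩ I =
      {w | ∃ h ∈ G, ⇑(h : IntervalHomeo) '' I = I ∧ h y = w} := by
  obtain ⟨w, hw, rfl⟩ := hI
  set S := openI \ closure (orbit G z) with hS
  have himS : ∀ g : IntervalHomeo, g ∈ G → ⇑g '' S = S := by
    intro g hg
    rw [hS, Set.image_diff g.injective, image_openI g]
    congr 1
    rw [show ⇑g = ⇑g.toHomeomorph from rfl, g.toHomeomorph.image_closure,
      OrderIso.coe_toHomeomorph, image_orbit G z hg]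
  intro y hy
  have hyS : y ∈ S := connectedComponentIn_subset S w hy
  have hIy : connectedComponentIn S w = connectedComponentIn S y := connectedComponentIn_eq hy
  ext x
  constructor
  · rintro ⟨⟨g, hg, rfl⟩, hgI⟩
    refine ⟨g, hg, ?_, rfl⟩
    have himg : ⇑g '' connectedComponentIn S y = connectedComponentIn S (g y) := by
      have := g.toHomeomorph.image_connectedComponentIn (s := S) hyS
      rw [OrderIso.coe_toHomeomorph] at this
      rw [this, himS g hg]
    rw [hIy] at hgI ⊢
    rw [himg, ← connectedComponentIn_eq hgI]
  · rintro ⟨h, hh, hhI, rfl⟩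
    exact ⟨⟨h, hh, rfl⟩, hhI ▸ Set.mem_image_of_mem _ hy⟩
end

section
/- Let G be a group of orientation-preserving homeomorphisms of [0,1] and let z ∈ (0,1) be a point whose G-orbit has integer type; enumerate O(z) increasingly as (z_n)_{n ∈ ℤ} and set I_n = (z_n, z_{n+1}). Then for every pair of integers i, j there exists g ∈ G with g(I_i) = I_j. -/
open Set Topology Filter

lemma orbit_apply_mem' (G : Subgroup IntervalHomeo) (z : unitInterval)
    (g : IntervalHomeo) (hg : g ∈ G) (y : unitInterval) (hy : y ∈ orbit G z) :
    g y ∈ orbit G z := by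
  obtain ⟨h, hh, hhy⟩ := hy
  exact ⟨g * h, G.mul_mem hg hh, by show g (h z) = g y; rw [hhy]⟩

lemma orbit_mem_iff' (G : Subgroup IntervalHomeo) (z : unitInterval)
    (g : IntervalHomeo) (hg : g ∈ G) (y : unitInterval) :
    g y ∈ orbit G z ↔ y ∈ orbit G z := by
  refine ⟨fun h => ?_, orbit_apply_mem' G z g hg y⟩
  have := orbit_apply_mem' G z g⁻¹ (G.inv_mem hg) _ h
  simpa [show (g⁻¹ : IntervalHomeo) (g y) = y from g.symm_apply_apply y] using this

lemma succ_step (G : Subgroup IntervalHomeo) (z : unitInterval)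
    (zseq : ℤ → unitInterval) (hmono : StrictMono zseq)
    (hrange : Set.range zseq = orbit G z)
    (g : IntervalHomeo) (hg : g ∈ G) (i j : ℤ) (hij : g (zseq i) = zseq j) :
    g (zseq (i + 1)) = zseq (j + 1) := by
  have hmem : ∀ n : ℤ, zseq n ∈ orbit G z := fun n => hrange ▸ mem_range_self n
  have h1 : g (zseq (i+1)) ∈ orbit G z := (orbit_mem_iff' G z g hg _).2 (hmem _)
  obtain ⟨k, hk⟩ := (hrange.symm ▸ h1 : _ ∈ Set.range zseq)
  have hjk : j < k := by
    have := g.strictMono (hmono (lt_add_one i))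
    rw [hij, ← hk] at this
    exact hmono.lt_iff_lt.mp this
  rcases eq_or_lt_of_le (Int.add_one_le_iff.mpr hjk) with h | h
  · rw [← hk, h]
  · exfalso
    have h2 : g.symm (zseq (j+1)) ∈ orbit G z :=
      (orbit_mem_iff' G z g⁻¹ (G.inv_mem hg) (zseq (j+1))).2 (hmem _)
    obtain ⟨m, hm⟩ := (hrange.symm ▸ h2 : _ ∈ Set.range zseq)
    have him : i < m := by
      have : g (zseq i) < g (zseq m) := by
        rw [hij, hm, g.apply_symm_apply]
        exact hmono (lt_add_one j)
      exact hmono.lt_iff_lt.mp (g.strictMono.lt_iff_lt.mp this)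
    have hmi : m < i + 1 := by
      have : g (zseq m) < g (zseq (i+1)) := by
        rw [hm, g.apply_symm_apply, ← hk]
        exact hmono h
      exact hmono.lt_iff_lt.mp (g.strictMono.lt_iff_lt.mp this)
    omega

/-- If the orbit of `z ∈ (0,1)` has integer type — an infinite set whose
accumulation set is exactly `{0,1}`, enumerated increasingly as `(z_n)_{n ∈ ℤ}` — then for
all integers `i, j` some `g ∈ G` maps `I_i = (z_i, z_{i+1})` onto `I_j = (z_j, z_{j+1})`. -/
theorem stmt15 (G : Subgroup IntervalHomeo) (z : unitInterval) (hz : z ∈ openI)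
    (hinf : (orbit G z).Infinite)
    (hacc : {p | AccPt p (𝓟 (orbit G z))} = {0, 1})
    (zseq : ℤ → unitInterval) (hmono : StrictMono zseq)
    (hrange : Set.range zseq = orbit G z) :
    ∀ i j : ℤ, ∃ g ∈ G,
      ⇑(g : IntervalHomeo) '' Set.Ioo (zseq i) (zseq (i + 1)) =
        Set.Ioo (zseq j) (zseq (j + 1)) := by
  intro i j
  have hi : zseq i ∈ orbit G z := hrange ▸ mem_range_self i
  have hj : zseq j ∈ orbit G z := hrange ▸ mem_range_self j
  obtain ⟨a, haG, ha⟩ := hi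
  obtain ⟨b, hbG, hb⟩ := hj
  refine ⟨b * a⁻¹, G.mul_mem hbG (G.inv_mem haG), ?_⟩
  have hgi : (b * a⁻¹) (zseq i) = zseq j := by
    show b (a.symm (zseq i)) = zseq j
    rw [← ha, a.symm_apply_apply, hb]
  have hgi1 := succ_step G z zseq hmono hrange (b * a⁻¹)
    (G.mul_mem hbG (G.inv_mem haG)) i j hgi
  rw [OrderIso.image_Ioo, hgi, hgi1]
end

section
/- Let G be a group of orientation-preserving homeomorphisms of [0,1] and let z ∈ (0,1) be a point whose G-orbit has integer type; enumerate O(z) increasingly as (z_n)_{n ∈ ℤ}, set I_n = (z_n, z_{n+1}), and let H_n = {g ∈ G : g(I_n) = I_n}. Then H_i = H_j for all integers i and j. -/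
open Set Topology Filter

/-!
Each `g ∈ G` permutes the orbit `{z_n}` increasingly, so it acts on the indices as an order
automorphism of `ℤ`, i.e. as a translation `n ↦ n + k`. Then `g(I_n) = I_{n+k}`, so `g` preserves
`I_i` exactly when `k = 0`, a condition not depending on `i`.
-/

theorem invariant_orbit (G : Subgroup IntervalHomeo) (z : unitInterval) :
    Invariant G (orbit G z) := by
  intro g hg
  ext y
  constructor
  · rintro ⟨x, ⟨h, hh, rfl⟩, rfl⟩
    exact ⟨g * h, mul_mem hg hh, rfl⟩
  · rintro ⟨h, hh, rfl⟩
    exact ⟨(g⁻¹ * h) z, ⟨g⁻¹ * h, mul_mem (inv_mem hg) hh, rfl⟩, g.apply_symm_apply _⟩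

theorem Int.orderIso_apply_eq_add (φ : ℤ ≃o ℤ) (n : ℤ) : φ n = n + φ 0 := by
  have hsucc : ∀ m, φ (m + 1) = φ m + 1 := fun m => by
    simpa only [Order.succ_eq_add_one] using φ.map_succ m
  induction n using Int.induction_on with
  | zero => simp
  | succ i ih => rw [hsucc, ih]; ring
  | pred i ih =>
    have := hsucc (-(i : ℤ) - 1)
    rw [sub_add_cancel] at this
    linarith

section Enumeration

variable {α : Type*} [LinearOrder α] {f : α ≃o α} {e : ℤ → α}

theorem exists_apply_eq_add_of_image_range (he : StrictMono e) (hf : f '' range e = range e) :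
    ∃ k : ℤ, ∀ n, f (e n) = e (n + k) := by
  have hmaps : ∀ n, ∃ m, e m = f (e n) := fun n => hf.subset (mem_image_of_mem f ⟨n, rfl⟩)
  choose φ hφ using hmaps
  have hφmono : StrictMono φ := fun a b hab =>
    he.lt_iff_lt.mp (by rw [hφ, hφ]; exact f.strictMono (he hab))
  have hφsurj : Function.Surjective φ := by
    intro m
    obtain ⟨_, ⟨n, rfl⟩, hn⟩ := hf.superset ⟨m, rfl⟩
    exact ⟨n, he.injective (by rw [hφ, hn])⟩
  refine ⟨φ 0, fun n => ?_⟩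
  have hshift := Int.orderIso_apply_eq_add (StrictMono.orderIsoOfSurjective φ hφmono hφsurj) n
  rw [StrictMono.coe_orderIsoOfSurjective] at hshift
  rw [← hφ, hshift]

theorem image_Ioo_eq_self_iff [DenselyOrdered α] (he : StrictMono e) (hf : f '' range e = range e)
    (i : ℤ) : f '' Ioo (e i) (e (i + 1)) = Ioo (e i) (e (i + 1)) ↔ ∀ n, f (e n) = e n := by
  refine ⟨fun h => ?_, fun h => by rw [f.image_Ioo, h, h]⟩
  obtain ⟨k, hk⟩ := exists_apply_eq_add_of_image_range he hf
  have hlt : e (i + k) < e (i + k + 1) := he (lt_add_one _)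
  rw [f.image_Ioo, hk, hk, add_right_comm] at h
  have h₁ := (Ioo_subset_Ioo_iff hlt).1 h.subset
  have h₂ := (Ioo_subset_Ioo_iff (he (lt_add_one i))).1 h.superset
  have hk0 : k = 0 := by
    have := he.injective (le_antisymm h₂.1 h₁.1)
    omega
  simpa [hk0] using hk

end Enumeration

theorem stmt16_general (G : Subgroup IntervalHomeo) (z : unitInterval)
    (zseq : ℤ → unitInterval) (hmono : StrictMono zseq)
    (hrange : Set.range zseq = orbit G z) :
    ∀ i j : ℤ,
      {g : IntervalHomeo | g ∈ G ∧
        ⇑g '' Set.Ioo (zseq i) (zseq (i + 1)) = Set.Ioo (zseq i) (zseq (i + 1))} =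
      {g : IntervalHomeo | g ∈ G ∧
        ⇑g '' Set.Ioo (zseq j) (zseq (j + 1)) = Set.Ioo (zseq j) (zseq (j + 1))} := by
  intro i j
  ext g
  refine and_congr_right fun hg => ?_
  have hperm : ⇑g '' range zseq = range zseq := by rw [hrange]; exact invariant_orbit G z g hg
  rw [image_Ioo_eq_self_iff hmono hperm i, image_Ioo_eq_self_iff hmono hperm j]

/-- If the orbit of `z ∈ (0,1)` has integer type — an infinite set whose
accumulation set is exactly `{0,1}`, enumerated increasingly as `(z_n)_{n ∈ ℤ}` — and
`H_n = {g ∈ G : g(I_n) = I_n}` where `I_n = (z_n, z_{n+1})`, then `H_i = H_j` for all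
integers `i, j`. -/
theorem stmt16 (G : Subgroup IntervalHomeo) (z : unitInterval) (hz : z ∈ openI)
    (hinf : (orbit G z).Infinite)
    (hacc : {p | AccPt p (𝓟 (orbit G z))} = {0, 1})
    (zseq : ℤ → unitInterval) (hmono : StrictMono zseq)
    (hrange : Set.range zseq = orbit G z) :
    ∀ i j : ℤ,
      {g : IntervalHomeo | g ∈ G ∧
        ⇑g '' Set.Ioo (zseq i) (zseq (i + 1)) = Set.Ioo (zseq i) (zseq (i + 1))} =
      {g : IntervalHomeo | g ∈ G ∧
        ⇑g '' Set.Ioo (zseq j) (zseq (j + 1)) = Set.Ioo (zseq j) (zseq (j + 1))} :=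
  stmt16_general G z zseq hmono hrange
end

section
/- Let G be a group of orientation-preserving homeomorphisms of [0,1] and let z ∈ (0,1) be a point whose G-orbit has integer type; enumerate O(z) increasingly as (z_n)_{n ∈ ℤ} and set I_n = (z_n, z_{n+1}). If y ∈ (0,1) ∖ O(z) is such that O(y) ∩ I_0 contains exactly one point, then for every n ∈ ℤ the set O(y) ∩ I_n contains exactly one point (i.e. O(y) is parallel to O(z)). -/
open Set Topology Filter

lemma orbit_mem_smul (G : Subgroup IntervalHomeo) (x w : unitInterval)
    (g : IntervalHomeo) (hg : g ∈ G) (hw : w ∈ orbit G x) : g w ∈ orbit G x := by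
  obtain ⟨h, hh, rfl⟩ := hw
  exact ⟨g * h, mul_mem hg hh, rfl⟩

/-- If the orbit of `z ∈ (0,1)` has integer type — an infinite set whose
accumulation set is exactly `{0,1}`, enumerated increasingly as `(z_n)_{n ∈ ℤ}` — and
`y ∈ (0,1) ∖ O(z)` is such that `O(y) ∩ I_0` is a single point (`I_n = (z_n, z_{n+1})`),
then `O(y) ∩ I_n` is a single point for every `n`, i.e. `O(y)` is parallel to `O(z)`. -/
theorem stmt17 (G : Subgroup IntervalHomeo) (z : unitInterval) (hz : z ∈ openI)
    (hinf : (orbit G z).Infinite)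
    (hacc : {p | AccPt p (𝓟 (orbit G z))} = {0, 1})
    (zseq : ℤ → unitInterval) (hmono : StrictMono zseq)
    (hrange : Set.range zseq = orbit G z)
    (y : unitInterval) (hy : y ∈ openI) (hyz : y ∉ orbit G z)
    (h0 : ∃ w, orbit G y ∩ Set.Ioo (zseq 0) (zseq 1) = {w}) :
    ∀ n : ℤ, ∃ w, orbit G y ∩ Set.Ioo (zseq n) (zseq (n + 1)) = {w} := by
  intro n
  obtain ⟨w, hw⟩ := h0
  have hwmem : w ∈ orbit G y ∩ Set.Ioo (zseq 0) (zseq 1) := by rw [hw]; exact rfl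
  -- find g ∈ G with g (zseq 0) = zseq n
  have h0m : zseq 0 ∈ orbit G z := hrange ▸ Set.mem_range_self 0
  have hnm : zseq n ∈ orbit G z := hrange ▸ Set.mem_range_self n
  obtain ⟨g0, hg0G, hg0⟩ := h0m
  obtain ⟨gn, hgnG, hgn⟩ := hnm
  set g : IntervalHomeo := gn * g0⁻¹ with hgdef
  have hgG : g ∈ G := mul_mem hgnG (inv_mem hg0G)
  have hg0n : g (zseq 0) = zseq n := by
    rw [← hg0, ← hgn, hgdef]
    show gn (g0⁻¹ (g0 z)) = gn z
    congr 1
    exact g0.symm_apply_apply z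
  -- g (zseq 1) = zseq (n+1)
  have h1m : g (zseq 1) ∈ orbit G z :=
    orbit_mem_smul G z _ g hgG (hrange ▸ Set.mem_range_self 1)
  obtain ⟨m, hm⟩ : ∃ m, zseq m = g (zseq 1) := by
    have := hrange ▸ h1m; exact this
  have hnltm : n < m := by
    have h01 : zseq n < zseq m := by
      rw [← hg0n, hm]; exact g.strictMono (hmono (by norm_num))
    exact hmono.lt_iff_lt.mp h01
  have hmeq : m = n + 1 := by
    by_contra hne
    have hlt : n + 1 < m := lt_of_le_of_ne hnltm (Ne.symm ?_)
    · -- g⁻¹ (zseq (n+1)) is an orbit point strictly between zseq 0 and zseq 1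
      have hcontra : g.symm (zseq (n+1)) ∈ orbit G z := by
        have : (g⁻¹ : IntervalHomeo) (zseq (n+1)) ∈ orbit G z :=
          orbit_mem_smul G z _ g⁻¹ (inv_mem hgG) (hrange ▸ Set.mem_range_self (n+1))
        exact this
      obtain ⟨k, hk⟩ : ∃ k, zseq k = g.symm (zseq (n+1)) := by
        have := hrange ▸ hcontra; exact this
      have h01 : zseq 0 < zseq k ∧ zseq k < zseq 1 := by
        constructor
        · rw [hk]
          have : g (zseq 0) < zseq (n+1) := hg0n ▸ hmono (by omega)
          have := g.symm.strictMono (show g (zseq 0) < zseq (n+1) from this)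
          rwa [g.symm_apply_apply] at this
        · rw [hk]
          have : zseq (n+1) < g (zseq 1) := by rw [← hm]; exact hmono hlt
          have := g.symm.strictMono this
          rwa [g.symm_apply_apply] at this
      have hk0 : (0:ℤ) < k := hmono.lt_iff_lt.mp h01.1
      have hk1 : k < 1 := hmono.lt_iff_lt.mp h01.2
      omega
    · exact hne
  have hg1 : g (zseq 1) = zseq (n+1) := by rw [← hm, hmeq]
  -- conclude
  refine ⟨g w, ?_⟩
  ext u
  simp only [Set.mem_inter_iff, Set.mem_Ioo, Set.mem_singleton_iff]
  constructor
  · rintro ⟨hu1, hu2, hu3⟩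
    have hsy : g.symm u ∈ orbit G y := by
      have : (g⁻¹ : IntervalHomeo) u ∈ orbit G y := orbit_mem_smul G y u g⁻¹ (inv_mem hgG) hu1
      exact this
    have hio : g.symm u ∈ Set.Ioo (zseq 0) (zseq 1) := by
      constructor
      · have := g.symm.strictMono (hg0n ▸ hu2)
        rwa [g.symm_apply_apply] at this
      · have := g.symm.strictMono (hg1 ▸ hu3)
        rwa [g.symm_apply_apply] at this
    have : g.symm u ∈ ({w} : Set unitInterval) := hw ▸ ⟨hsy, hio⟩
    have heq : g.symm u = w := this
    rw [← heq, g.apply_symm_apply]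
  · rintro rfl
    refine ⟨orbit_mem_smul G y w g hgG hwmem.1, ?_, ?_⟩
    · exact hg0n ▸ g.strictMono hwmem.2.1
    · exact hg1 ▸ g.strictMono hwmem.2.2
end
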